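/- For |q| < 1, a positive integer α, and any injective ψ : ℕ → ℕ with positive values, ∏_{n≥1} (1 − q^{(α+1)ψ(n)})/(1 − q^{ψ(n)}) = ∏_{n≥1} 1/(1 − q^{ψ(n)}) · ∏_{i≥0} ∏_{n≥1} 1/(1 + q^{2^i (α+1) ψ(n)}). -/

import Mathlib

/-!
With `x = q ^ ((α + 1) * ψ n)`, Euler's identity `∏ᵢ (1 + x ^ 2 ^ i) = (1 - x)⁻¹` (the partial
products telescope to `(1 - x ^ 2 ^ N) / (1 - x)`) expresses each factor of the double product on
the right through one factor of the numerator on the left. Since `‖x ^ 2 ^ i‖ ≤ ‖q‖ ^ i * ‖x‖`,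
the double product converges absolutely and the products over `i` and `n` may be interchanged,
so the double product of inverses equals `∏ₙ (1 - q ^ ((α + 1) * ψ n))`.
-/

open Filter Topology

section InfiniteProducts

variable {𝕜 ι : Type*} [NormedField 𝕜]

lemma one_add_ne_zero_of_norm_lt_one {z : 𝕜} (hz : ‖z‖ < 1) : 1 + z ≠ 0 := by
  intro h
  rw [eq_neg_of_add_eq_zero_right h, norm_neg, norm_one] at hz
  exact hz.false

lemma summable_norm_pow_comp_injective {q : 𝕜} (hq : ‖q‖ < 1) {m : ι → ℕ}
    (hm : Function.Injective m) : Summable fun n ↦ ‖q ^ m n‖ := by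
  simp_rw [norm_pow]
  exact (summable_geometric_of_lt_one (norm_nonneg q) hq).comp_injective hm

lemma summable_norm_pow_two_pow {x : ι → 𝕜} {r : ℝ} (hr : r < 1) (hx : ∀ n, ‖x n‖ ≤ r)
    (hs : Summable (‖x ·‖)) : Summable fun p : ℕ × ι ↦ ‖x p.2 ^ 2 ^ p.1‖ := by
  set s := max r 0
  have hs₁ : s < 1 := max_lt hr zero_lt_one
  have hprod : Summable fun p : ℕ × ι ↦ s ^ p.1 * ‖x p.2‖ :=
    (summable_geometric_of_lt_one (le_max_right r 0) hs₁).mul_of_nonneg hs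
      (fun _ ↦ pow_nonneg (le_max_right r 0) _) fun _ ↦ norm_nonneg _
  refine hprod.of_nonneg_of_le (fun _ ↦ norm_nonneg _) fun ⟨i, n⟩ ↦ ?_
  have hxn : ‖x n‖ ≤ s := (hx n).trans (le_max_left r 0)
  calc ‖x n ^ 2 ^ i‖ = ‖x n‖ ^ 2 ^ i := norm_pow _ _
    _ ≤ ‖x n‖ ^ (i + 1) :=
      pow_le_pow_of_le_one (norm_nonneg _) (hxn.trans hs₁.le) Nat.lt_two_pow_self
    _ ≤ s ^ i * ‖x n‖ := by
      rw [pow_succ]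
      gcongr

variable [CompleteSpace 𝕜]

lemma multipliable_one_sub_of_summable {f : ι → 𝕜} (hf : Summable (‖f ·‖)) :
    Multipliable fun i ↦ 1 - f i := by
  simp_rw [sub_eq_add_neg]
  exact multipliable_one_add_of_summable (by simpa using hf)

lemma tprod_one_sub_ne_zero_of_summable {f : ι → 𝕜} (hf : ∀ i, ‖f i‖ < 1)
    (hs : Summable (‖f ·‖)) : ∏' i, (1 - f i) ≠ 0 := by
  simp_rw [sub_eq_add_neg]
  exact tprod_one_add_ne_zero_of_summable
    (fun i ↦ one_add_ne_zero_of_norm_lt_one (by simpa using hf i)) (by simpa using hs)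

theorem hasProd_one_add_pow_two_pow {x : 𝕜} (hx : ‖x‖ < 1) :
    HasProd (fun i : ℕ ↦ 1 + x ^ 2 ^ i) (1 - x)⁻¹ := by
  have hx₁ : 1 - x ≠ 0 := sub_ne_zero.mpr fun h ↦ by simp [← h] at hx
  have hmul : Multipliable fun i : ℕ ↦ 1 + x ^ 2 ^ i := by
    refine multipliable_one_add_of_summable <|
      (summable_geometric_of_lt_one (norm_nonneg x) hx).of_nonneg_of_le (fun _ ↦ norm_nonneg _)
        fun i ↦ ?_
    rw [norm_pow]
    exact pow_le_pow_of_le_one (norm_nonneg x) hx.le (Nat.lt_two_pow_self).le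
  have partial_prod (N : ℕ) :
      ∏ i ∈ Finset.range N, (1 + x ^ 2 ^ i) = (1 - x)⁻¹ * (1 - x ^ 2 ^ N) := by
    induction N with
    | zero => simp [hx₁]
    | succ N ih =>
      rw [Finset.prod_range_succ, ih, pow_succ, pow_mul]
      ring
  have hlim : Tendsto (fun N : ℕ ↦ x ^ 2 ^ N) atTop (𝓝 0) :=
    (tendsto_pow_atTop_nhds_zero_of_norm_lt_one hx).comp
      (tendsto_pow_atTop_atTop_of_one_lt (one_lt_two : 1 < 2))
  rw [hmul.hasProd_iff_tendsto_nat]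
  simp_rw [partial_prod]
  simpa using ((tendsto_const_nhds (x := (1 : 𝕜))).sub hlim).const_mul (1 - x)⁻¹

theorem tprod_tprod_inv_one_add_pow_two_pow {x : ι → 𝕜} {r : ℝ} (hr : r < 1)
    (hx : ∀ n, ‖x n‖ ≤ r) (hs : Summable (‖x ·‖)) :
    ∏' i : ℕ, ∏' n, (1 + x n ^ 2 ^ i)⁻¹ = ∏' n, (1 - x n) := by
  have hx₁ (n : ι) : ‖x n‖ < 1 := (hx n).trans_lt hr
  have hpow (i : ℕ) (n : ι) : ‖x n ^ 2 ^ i‖ < 1 := by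
    rw [norm_pow]
    exact pow_lt_one₀ (norm_nonneg _) (hx₁ n) (by positivity)
  have hsum := summable_norm_pow_two_pow hr hx hs
  have hfiber (i : ℕ) : Summable fun n ↦ ‖x n ^ 2 ^ i‖ := hsum.prod_factor i
  have hfiber_ne (i : ℕ) : ∏' n, (1 + x n ^ 2 ^ i) ≠ 0 :=
    tprod_one_add_ne_zero_of_summable (fun n ↦ one_add_ne_zero_of_norm_lt_one (hpow i n))
      (hfiber i)
  obtain ⟨P, hP⟩ := multipliable_one_add_of_summable (f := fun p : ℕ × ι ↦ x p.2 ^ 2 ^ p.1) hsum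
  have hP_eq : P = (∏' n, (1 - x n))⁻¹ := by
    have hswap : HasProd (fun p : ι × ℕ ↦ 1 + x p.1 ^ 2 ^ p.2) P :=
      ((Equiv.prodComm ι ℕ).hasProd_iff (f := fun p : ℕ × ι ↦ 1 + x p.2 ^ 2 ^ p.1)).mpr hP
    have heuler (n : ι) : HasProd (fun i : ℕ ↦ 1 + x n ^ 2 ^ i) (1 - x n)⁻¹ :=
      hasProd_one_add_pow_two_pow (hx₁ n)
    have hrows : HasProd (fun n ↦ (1 - x n)⁻¹) P := hswap.prod_fiberwise heuler
    exact hrows.unique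
      ((multipliable_one_sub_of_summable hs).hasProd.inv₀
        (tprod_one_sub_ne_zero_of_summable hx₁ hs))
  have hP_ne : P ≠ 0 := hP_eq ▸ inv_ne_zero (tprod_one_sub_ne_zero_of_summable hx₁ hs)
  have hinner : HasProd (fun i : ℕ ↦ ∏' n, (1 + x n ^ 2 ^ i)) P :=
    hP.prod_fiberwise fun i ↦ (multipliable_one_add_of_summable (hfiber i)).hasProd
  calc ∏' i : ℕ, ∏' n, (1 + x n ^ 2 ^ i)⁻¹ = ∏' i : ℕ, (∏' n, (1 + x n ^ 2 ^ i))⁻¹ :=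
        tprod_congr fun i ↦ (multipliable_one_add_of_summable (hfiber i)).tprod_inv₀ (hfiber_ne i)
    _ = ∏' n, (1 - x n) := by rw [(hinner.inv₀ hP_ne).tprod_eq, hP_eq, inv_inv]

end InfiniteProducts

theorem stmt_15_general (q : ℂ) (hq : ‖q‖ < 1) (ψ : ℕ → ℕ)
    (hinj : Function.Injective ψ) (hpos : ∀ n, 1 ≤ ψ n)
    (α : ℕ) :
    ∏' n : ℕ, (((1 : ℂ) - q ^ ((α + 1) * ψ n)) / ((1 : ℂ) - q ^ ψ n)) =
      (∏' n : ℕ, ((1 : ℂ) - q ^ ψ n)⁻¹) *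
        ∏' i : ℕ, ∏' n : ℕ, ((1 : ℂ) + q ^ (2 ^ i * ((α + 1) * ψ n)))⁻¹ := by
  have hψ (n : ℕ) : ψ n ≠ 0 := Nat.one_le_iff_ne_zero.mp (hpos n)
  have hle (n : ℕ) : ‖q ^ ((α + 1) * ψ n)‖ ≤ ‖q‖ := by
    rw [norm_pow]
    exact pow_le_of_le_one (norm_nonneg q) hq.le (mul_ne_zero α.succ_ne_zero (hψ n))
  have hlt (n : ℕ) : ‖q ^ ψ n‖ < 1 := by
    rw [norm_pow]
    exact pow_lt_one₀ (norm_nonneg q) hq (hψ n)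
  have hsψ := summable_norm_pow_comp_injective hq hinj
  have hs := summable_norm_pow_comp_injective hq
    fun a b h ↦ hinj (Nat.eq_of_mul_eq_mul_left α.succ_pos h)
  have hden := multipliable_one_sub_of_summable hsψ
  have hden_ne := tprod_one_sub_ne_zero_of_summable hlt hsψ
  simp_rw [mul_comm (2 ^ _), pow_mul _ _ (2 ^ _)]
  rw [tprod_tprod_inv_one_add_pow_two_pow hq hle hs, hden.tprod_inv₀ hden_ne,
    (multipliable_one_sub_of_summable hs).tprod_div₀ hden hden_ne, div_eq_inv_mul]

theorem stmt_15 (q : ℂ) (hq : ‖q‖ < 1) (ψ : ℕ → ℕ)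
    (hinj : Function.Injective ψ) (hpos : ∀ n, 1 ≤ ψ n)
    (α : ℕ) (hα : 1 ≤ α) :
    ∏' n : ℕ, (((1 : ℂ) - q ^ ((α + 1) * ψ n)) / ((1 : ℂ) - q ^ ψ n)) =
      (∏' n : ℕ, ((1 : ℂ) - q ^ ψ n)⁻¹) *
        ∏' i : ℕ, ∏' n : ℕ, ((1 : ℂ) + q ^ (2 ^ i * ((α + 1) * ψ n)))⁻¹ :=
  stmt_15_general q hq ψ hinj hpos α
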